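/- (Gauss' Lemma for semidomains) Let S be a subtractive factorial semidomain with semifield of fractions F. Then the content function cont : F[X] → F is multiplicative: for all polynomials f, g ∈ F[X], cont(fg) = cont(f)·cont(g) up to multiplication by a unit of S. -/

import Mathlib

open Polynomial

/-- `ord` is an order function at the prime `p` on the semifield of fractions `F` of `S`:
for every nonzero `a ∈ F`, `a = p ^ (ord a) * (x / y)` where `p` divides neither the
numerator `x` nor the denominator `y`. (`ord_p(0)` is `∞` by convention and is not
constrained here.) -/
def IsOrd {S F : Type*} [CommSemiring S] [Semifield F] [Algebra S F]
    (p : S) (ord : F → ℤ) : Prop :=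
  ∀ a : F, a ≠ 0 → ∃ x y : S, ¬ p ∣ x ∧ ¬ p ∣ y ∧ y ≠ 0 ∧
    a = (algebraMap S F p) ^ (ord a) * (algebraMap S F x / algebraMap S F y)

/-- The order of a polynomial at a prime: the minimum of `ord` over the nonzero
coefficients, with value `⊤` (i.e. `∞`) for the zero polynomial. -/
def ordPoly {F : Type*} [Semifield F] (ord : F → ℤ) (f : Polynomial F) : WithTop ℤ :=
  f.support.inf fun i => ((ord (f.coeff i) : ℤ) : WithTop ℤ)

/-- `c` is a content for the polynomial `f` over the semifield of fractions `F` of `S`: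
the content of the zero polynomial is `0`, and for `f ≠ 0` the content is a nonzero
element whose order at every prime `p` of `S` equals `ord_p(f)`, the minimum of the
orders of the nonzero coefficients of `f` (this characterizes `∏ p ^ ord_p(f)` up to a
unit of `S`). -/
def IsContent {S F : Type*} [CommSemiring S] [Semifield F] [Algebra S F]
    (f : Polynomial F) (c : F) : Prop :=
  (f = 0 → c = 0) ∧ (f ≠ 0 → c ≠ 0 ∧ ∀ (p : S) (ordp : F → ℤ), Prime p → IsOrd p ordp →
    ((ordp c : ℤ) : WithTop ℤ) = ordPoly ordp f)

/-! For a prime `p` of `S`, the order `ord_p` behaves like a discrete valuation on `F`, and the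
one place where rings use subtraction is replaced by subtractivity: if `ord_p r > ord_p a`, write
`a + r = p ^ n * (x * y' + p * s * y) / (y * y')` with `p ∤ x, y, y'`; since the ideal `(p)` is
subtractive, `p ∤ x * y' + p * s * y`, so `ord_p (a + r) = ord_p a`. Taking the first coefficients
`f i₀`, `g j₀` of minimal order, the coefficient of `X ^ (i₀ + j₀)` in `f * g` is `f i₀ * g j₀` plus
terms of larger order, so `ord_p (f * g) = ord_p f + ord_p g` for every prime `p`. Finally, `S` is
a unique factorization monoid, so two nonzero elements of `F` with the same order at every prime
differ by a unit of `S`. -/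

theorem ne_zero_of_not_dvd {M : Type*} [SemigroupWithZero M] {p y : M} (h : ¬ p ∣ y) : y ≠ 0 := by
  rintro rfl
  exact h (dvd_zero p)

section Localization

variable {S F : Type*} [CommSemiring S] [IsCancelMulZero S] [Semifield F] [Algebra S F]
  [IsLocalization (nonZeroDivisors S) F]

theorem algebraMap_injective_of_isCancelMulZero : Function.Injective (algebraMap S F) := by
  have := (algebraMap S F).domain_nontrivial
  exact IsLocalization.injectiveₛ F fun _ hm => .of_ne_zero (nonZeroDivisors.ne_zero hm)

theorem algebraMap_ne_zero_of_ne_zero {s : S} (hs : s ≠ 0) : algebraMap S F s ≠ 0 :=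
  (map_ne_zero_iff _ algebraMap_injective_of_isCancelMulZero).mpr hs

theorem exists_eq_algebraMap_div (a : F) :
    ∃ x y : S, y ≠ 0 ∧ a = algebraMap S F x / algebraMap S F y := by
  obtain ⟨x, ⟨y, hy⟩, rfl⟩ := IsLocalization.exists_mk'_eq (nonZeroDivisors S) a
  have := (algebraMap S F).domain_nontrivial
  have hy0 := nonZeroDivisors.ne_zero hy
  refine ⟨x, y, hy0, ?_⟩
  rw [eq_div_iff (algebraMap_ne_zero_of_ne_zero hy0)]
  exact IsLocalization.mk'_spec F x ⟨y, hy⟩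

end Localization

section Order

variable {S F : Type*} [CommSemiring S] [IsCancelMulZero S] [Semifield F] [Algebra S F]
  [IsLocalization (nonZeroDivisors S) F] {p : S}

theorem zpow_mul_div_ne_zero (hp : p ≠ 0) (n : ℤ) {x y : S} (hx : x ≠ 0) (hy : y ≠ 0) :
    algebraMap S F p ^ n * (algebraMap S F x / algebraMap S F y) ≠ 0 :=
  mul_ne_zero (zpow_ne_zero n (algebraMap_ne_zero_of_ne_zero hp))
    (div_ne_zero (algebraMap_ne_zero_of_ne_zero hx) (algebraMap_ne_zero_of_ne_zero hy))

theorem le_of_zpow_mul_div_eq (hp : Prime p) {m n : ℤ} {x y x' y' : S}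
    (hx : ¬ p ∣ x) (hy : y ≠ 0) (hy' : ¬ p ∣ y')
    (h : algebraMap S F p ^ m * (algebraMap S F x / algebraMap S F y) =
      algebraMap S F p ^ n * (algebraMap S F x' / algebraMap S F y')) : n ≤ m := by
  by_contra! hmn
  obtain ⟨k, rfl⟩ : ∃ k : ℕ, n = m + (k + 1 : ℕ) := ⟨(n - m - 1).toNat, by omega⟩
  have hP := algebraMap_ne_zero_of_ne_zero (F := F) hp.ne_zero
  have hy'0 : y' ≠ 0 := ne_zero_of_not_dvd hy'
  rw [zpow_add₀ hP, mul_assoc, zpow_natCast] at h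
  replace h := mul_left_cancel₀ (zpow_ne_zero m hP) h
  rw [← mul_div_assoc, div_eq_div_iff (algebraMap_ne_zero_of_ne_zero hy)
    (algebraMap_ne_zero_of_ne_zero hy'0)] at h
  have hxy : x * y' = p ^ (k + 1) * x' * y :=
    algebraMap_injective_of_isCancelMulZero (F := F) (by simpa only [map_mul, map_pow] using h)
  have hdvd : p ∣ x * y' := hxy ▸ ((dvd_pow_self p k.succ_ne_zero).mul_right x').mul_right y
  exact hp.not_dvd_mul hx hy' hdvd

namespace IsOrd

variable {ord : F → ℤ}

theorem apply_eq_of_eq (hp : Prime p) (hord : IsOrd p ord) {a : F} {n : ℤ} {x y : S}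
    (hx : ¬ p ∣ x) (hy : ¬ p ∣ y)
    (h : a = algebraMap S F p ^ n * (algebraMap S F x / algebraMap S F y)) : ord a = n := by
  have hy0 : y ≠ 0 := ne_zero_of_not_dvd hy
  have ha : a ≠ 0 := h ▸ zpow_mul_div_ne_zero hp.ne_zero n (ne_zero_of_not_dvd hx) hy0
  obtain ⟨x', y', hx', hy', hy'0, h'⟩ := hord a ha
  exact le_antisymm (le_of_zpow_mul_div_eq hp hx hy0 hy' (h.symm.trans h'))
    (le_of_zpow_mul_div_eq hp hx' hy'0 hy (h'.symm.trans h))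

protected theorem map_mul (hp : Prime p) (hord : IsOrd p ord) {a b : F} (ha : a ≠ 0)
    (hb : b ≠ 0) : ord (a * b) = ord a + ord b := by
  obtain ⟨x, y, hx, hy, -, ha'⟩ := hord a ha
  obtain ⟨x', y', hx', hy', -, hb'⟩ := hord b hb
  refine hord.apply_eq_of_eq hp (hp.not_dvd_mul hx hx') (hp.not_dvd_mul hy hy') ?_
  conv_lhs => rw [ha', hb']
  rw [zpow_add₀ (algebraMap_ne_zero_of_ne_zero hp.ne_zero), map_mul, map_mul]
  ring

end IsOrd

end Order

section OrdGe

variable {S F : Type*} [CommSemiring S] [Semifield F] [Algebra S F] {p : S} {m n : ℤ} {a b : F}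

/-- `a ∈ p ^ n S_(p)`, i.e. `ord_p a ≥ n` (also for `a = 0`). -/
def OrdGe (p : S) (n : ℤ) (a : F) : Prop :=
  ∃ s y : S, ¬ p ∣ y ∧ a = algebraMap S F p ^ n * (algebraMap S F s / algebraMap S F y)

theorem OrdGe.zero (hp : Prime p) : OrdGe p n (0 : F) :=
  ⟨0, 1, hp.not_dvd_one, by simp⟩

variable [IsCancelMulZero S] [IsLocalization (nonZeroDivisors S) F]

namespace OrdGe

theorem mono (hp : p ≠ 0) (hmn : m ≤ n) (ha : OrdGe p n a) : OrdGe p m a := by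
  obtain ⟨s, y, hy, rfl⟩ := ha
  obtain ⟨k, rfl⟩ : ∃ k : ℕ, n = m + k := ⟨(n - m).toNat, by omega⟩
  refine ⟨p ^ k * s, y, hy, ?_⟩
  rw [zpow_add₀ (algebraMap_ne_zero_of_ne_zero hp), zpow_natCast, map_mul, map_pow]
  ring

theorem add (hp : Prime p) (ha : OrdGe p n a) (hb : OrdGe p n b) : OrdGe p n (a + b) := by
  obtain ⟨s, y, hy, rfl⟩ := ha
  obtain ⟨s', y', hy', rfl⟩ := hb
  refine ⟨s * y' + y * s', y * y', hp.not_dvd_mul hy hy', ?_⟩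
  have hY := algebraMap_ne_zero_of_ne_zero (F := F) (ne_zero_of_not_dvd hy)
  have hY' := algebraMap_ne_zero_of_ne_zero (F := F) (ne_zero_of_not_dvd hy')
  simp only [map_add, map_mul]
  field_simp

theorem mul (hp : Prime p) (ha : OrdGe p m a) (hb : OrdGe p n b) : OrdGe p (m + n) (a * b) := by
  obtain ⟨s, y, hy, rfl⟩ := ha
  obtain ⟨s', y', hy', rfl⟩ := hb
  refine ⟨s * s', y * y', hp.not_dvd_mul hy hy', ?_⟩
  rw [zpow_add₀ (algebraMap_ne_zero_of_ne_zero hp.ne_zero), map_mul, map_mul]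
  ring

theorem sum (hp : Prime p) {ι : Type*} (t : Finset ι) (f : ι → F)
    (hf : ∀ i ∈ t, OrdGe p n (f i)) : OrdGe p n (∑ i ∈ t, f i) :=
  Finset.sum_induction f (OrdGe p n) (fun _ _ => add hp) (zero hp) hf

end OrdGe

namespace IsOrd

variable {ord : F → ℤ}

theorem ordGe_iff (hp : Prime p) (hord : IsOrd p ord) (ha : a ≠ 0) :
    OrdGe p n a ↔ n ≤ ord a := by
  obtain ⟨x, y, hx, hy, hy0, h⟩ := hord a ha
  refine ⟨fun ⟨s, y', hy', h'⟩ => le_of_zpow_mul_div_eq hp hx hy0 hy' (h.symm.trans h'),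
    fun hn => OrdGe.mono hp.ne_zero hn ⟨x, y, hy, h⟩⟩

theorem add_ordGe_succ (hp : Prime p) (hord : IsOrd p ord)
    (hsub : ∀ s t : S, p ∣ s + t → p ∣ s → p ∣ t) {r : F} (ha : a ≠ 0)
    (hr : OrdGe p (ord a + 1) r) : a + r ≠ 0 ∧ ord (a + r) = ord a := by
  obtain ⟨x, y, hx, hy, hy0, ha'⟩ := hord a ha
  obtain ⟨s, y', hy', hr'⟩ := hr
  have hnum : ¬ p ∣ x * y' + p * (s * y) := fun h =>
    hp.not_dvd_mul hx hy' (hsub _ _ (add_comm (x * y') _ ▸ h) (dvd_mul_right _ _))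
  have hsum : a + r = algebraMap S F p ^ ord a *
      (algebraMap S F (x * y' + p * (s * y)) / algebraMap S F (y * y')) := by
    have hY := algebraMap_ne_zero_of_ne_zero (F := F) hy0
    have hY' := algebraMap_ne_zero_of_ne_zero (F := F) (ne_zero_of_not_dvd hy')
    conv_lhs => rw [ha', hr']
    rw [zpow_add_one₀ (algebraMap_ne_zero_of_ne_zero hp.ne_zero)]
    simp only [map_add, map_mul]
    field_simp
  exact ⟨hsum ▸ zpow_mul_div_ne_zero hp.ne_zero _ (ne_zero_of_not_dvd hnum)
    (mul_ne_zero hy0 (ne_zero_of_not_dvd hy')),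
    hord.apply_eq_of_eq hp hnum (hp.not_dvd_mul hy hy') hsum⟩

end IsOrd

end OrdGe

section Polynomial

theorem ordPoly_le_ord_coeff {F : Type*} [Semifield F] (ord : F → ℤ) {f : F[X]} {i : ℕ}
    (hi : f.coeff i ≠ 0) : ordPoly ord f ≤ ord (f.coeff i) :=
  Finset.inf_le (mem_support_iff.mpr hi)

theorem exists_ordPoly_eq {F : Type*} [Semifield F] (ord : F → ℤ) {f : F[X]} (hf : f ≠ 0) :
    ∃ i, f.coeff i ≠ 0 ∧ ordPoly ord f = ord (f.coeff i) := by
  obtain ⟨i, hi, h⟩ := Finset.exists_mem_eq_inf f.support (nonempty_support_iff.mpr hf)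
    fun i => ((ord (f.coeff i) : ℤ) : WithTop ℤ)
  exact ⟨i, mem_support_iff.mp hi, h⟩

variable {S F : Type*} [CommSemiring S] [IsCancelMulZero S] [Semifield F] [Algebra S F]
  [IsLocalization (nonZeroDivisors S) F] {p : S} {ord : F → ℤ}

theorem forall_ordGe_coeff_iff (hp : Prime p) (hord : IsOrd p ord) {f : F[X]} {n : ℤ} :
    (∀ i, OrdGe p n (f.coeff i)) ↔ (n : WithTop ℤ) ≤ ordPoly ord f := by
  rw [ordPoly, Finset.le_inf_iff]
  refine forall_congr' fun i => ?_
  by_cases hi : f.coeff i = 0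
  · simp [hi, OrdGe.zero hp]
  · simp [hord.ordGe_iff hp hi, mem_support_iff.mpr hi]

theorem exists_first_coeff_ord_eq_ordPoly (hp : Prime p) (hord : IsOrd p ord) {f : F[X]}
    (hf : f ≠ 0) : ∃ (M : ℤ) (i₀ : ℕ), ordPoly ord f = M ∧ f.coeff i₀ ≠ 0 ∧
      ord (f.coeff i₀) = M ∧ ∀ i < i₀, OrdGe p (M + 1) (f.coeff i) := by
  classical
  obtain ⟨i, hi, hfi⟩ := exists_ordPoly_eq ord hf
  have hex : ∃ j, f.coeff j ≠ 0 ∧ ord (f.coeff j) = ord (f.coeff i) := ⟨i, hi, rfl⟩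
  refine ⟨_, Nat.find hex, hfi, (Nat.find_spec hex).1, (Nat.find_spec hex).2, fun j hj => ?_⟩
  by_cases hj0 : f.coeff j = 0
  · rw [hj0]
    exact OrdGe.zero hp
  have hle : ord (f.coeff i) ≤ ord (f.coeff j) := by
    exact_mod_cast hfi ▸ ordPoly_le_ord_coeff ord hj0
  have hne : ord (f.coeff j) ≠ ord (f.coeff i) := fun h => Nat.find_min hex hj ⟨hj0, h⟩
  exact (hord.ordGe_iff hp hj0).mpr (by omega)

open Finset.HasAntidiagonal in
theorem exists_coeff_mul_eq_add_ordGe (hp : Prime p) {f g : F[X]} {M N : ℤ} {i₀ j₀ : ℕ}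
    (hf : ∀ i, OrdGe p M (f.coeff i)) (hg : ∀ j, OrdGe p N (g.coeff j))
    (hf₀ : ∀ i < i₀, OrdGe p (M + 1) (f.coeff i)) (hg₀ : ∀ j < j₀, OrdGe p (N + 1) (g.coeff j)) :
    ∃ r, OrdGe p (M + N + 1) r ∧ (f * g).coeff (i₀ + j₀) = f.coeff i₀ * g.coeff j₀ + r := by
  have hmem : (i₀, j₀) ∈ antidiagonal (i₀ + j₀) := mem_antidiagonal.mpr rfl
  refine ⟨∑ ij ∈ (antidiagonal (i₀ + j₀)).erase (i₀, j₀), f.coeff ij.1 * g.coeff ij.2,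
    OrdGe.sum hp _ _ fun ij hij => ?_, by rw [coeff_mul, ← Finset.add_sum_erase _ _ hmem]⟩
  obtain ⟨hne, hsum⟩ := Finset.mem_erase.mp hij
  rw [mem_antidiagonal] at hsum
  rcases lt_or_ge ij.1 i₀ with hi | hi
  · exact ((hf₀ _ hi).mul hp (hg _)).mono hp.ne_zero (by omega)
  · have hj : ij.2 < j₀ := by
      by_contra
      exact hne (Prod.ext (by omega) (by omega))
    exact ((hf _).mul hp (hg₀ _ hj)).mono hp.ne_zero (by omega)

theorem ordPoly_mul (hp : Prime p) (hord : IsOrd p ord)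
    (hsub : ∀ s t : S, p ∣ s + t → p ∣ s → p ∣ t) {f g : F[X]} (hf : f ≠ 0) (hg : g ≠ 0) :
    ordPoly ord (f * g) = ordPoly ord f + ordPoly ord g := by
  obtain ⟨M, i₀, hM, hi₀, hi₀M, hf₀⟩ := exists_first_coeff_ord_eq_ordPoly hp hord hf
  obtain ⟨N, j₀, hN, hj₀, hj₀N, hg₀⟩ := exists_first_coeff_ord_eq_ordPoly hp hord hg
  have hfM := (forall_ordGe_coeff_iff hp hord).mpr hM.ge
  have hgN := (forall_ordGe_coeff_iff hp hord).mpr hN.ge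
  obtain ⟨r, hr, hcoeff⟩ := exists_coeff_mul_eq_add_ordGe hp hfM hgN hf₀ hg₀
  have hlead : ord (f.coeff i₀ * g.coeff j₀) = M + N := by
    rw [hord.map_mul hp hi₀ hj₀, hi₀M, hj₀N]
  obtain ⟨hne, hord_eq⟩ := hord.add_ordGe_succ hp hsub (mul_ne_zero hi₀ hj₀) (hlead ▸ hr)
  rw [← hcoeff, hlead] at hord_eq
  rw [hM, hN, ← WithTop.coe_add]
  refine le_antisymm (hord_eq ▸ ordPoly_le_ord_coeff ord (hcoeff ▸ hne)) ?_
  refine (forall_ordGe_coeff_iff hp hord).mp fun k => ?_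
  rw [coeff_mul]
  exact OrdGe.sum hp _ _ fun ij _ => (hfM ij.1).mul hp (hgN ij.2)

end Polynomial

theorem UniqueFactorizationMonoid.of_irreducible_prime_of_exists_irreducible_factors
    {S : Type*} [CommMonoidWithZero S] [IsCancelMulZero S]
    (hprime : ∀ s : S, Irreducible s → Prime s)
    (hfac : ∀ s : S, s ≠ 0 → ¬ IsUnit s →
      ∃ m : Multiset S, (∀ t ∈ m, Irreducible t) ∧ m.prod = s) :
    UniqueFactorizationMonoid S :=
  .of_exists_prime_factors fun s hs => by
    by_cases hu : IsUnit s
    · exact ⟨0, by simp, by simpa using (associated_one_iff_isUnit.mpr hu).symm⟩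
    · obtain ⟨m, hm, rfl⟩ := hfac s hs hu
      exact ⟨m, fun t ht => hprime t (hm t ht), .refl _⟩

section Factorial

variable {S F : Type*} [CommSemiring S] [Semifield F] [Algebra S F]
  [IsLocalization (nonZeroDivisors S) F]

section WfDvdMonoid

variable [IsCancelMulZero S] [WfDvdMonoid S] {p : S}

theorem exists_isOrd (hp : Prime p) : ∃ ord : F → ℤ, IsOrd p ord := by
  have hP := algebraMap_ne_zero_of_ne_zero (F := F) hp.ne_zero
  have key : ∀ a : F, a ≠ 0 → ∃ n : ℤ, ∃ x y : S, ¬ p ∣ x ∧ ¬ p ∣ y ∧ y ≠ 0 ∧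
      a = algebraMap S F p ^ n * (algebraMap S F x / algebraMap S F y) := by
    intro a ha
    obtain ⟨x, y, hy, rfl⟩ := exists_eq_algebraMap_div (S := S) a
    have hx : x ≠ 0 := by
      rintro rfl
      simp at ha
    obtain ⟨k, x₀, hx₀, rfl⟩ := WfDvdMonoid.max_power_factor hx hp.irreducible
    obtain ⟨l, y₀, hy₀, rfl⟩ := WfDvdMonoid.max_power_factor hy hp.irreducible
    refine ⟨k - l, x₀, y₀, hx₀, hy₀, ne_zero_of_not_dvd hy₀, ?_⟩
    have hY₀ := algebraMap_ne_zero_of_ne_zero (F := F) (ne_zero_of_not_dvd hy₀)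
    rw [zpow_sub₀ hP, zpow_natCast, zpow_natCast, map_mul, map_mul, map_pow, map_pow]
    field_simp
  choose! n x y hx hy hy0 h using key
  exact ⟨n, fun a ha => ⟨x a, y a, hx a ha, hy a ha, hy0 a ha, h a ha⟩⟩

theorem IsOrd.apply_algebraMap {ord : F → ℤ} (hp : Prime p) (hord : IsOrd p ord) {s : S}
    (hs : s ≠ 0) : ord (algebraMap S F s) = multiplicity p s := by
  obtain ⟨k, s₀, hs₀, rfl⟩ := WfDvdMonoid.max_power_factor hs hp.irreducible
  have hmult : emultiplicity p (p ^ k * s₀) = k := by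
    rw [emultiplicity_mul hp, emultiplicity_pow_self_of_prime hp, emultiplicity_eq_zero.mpr hs₀,
      add_zero]
  rw [multiplicity_eq_of_emultiplicity_eq_some hmult]
  refine hord.apply_eq_of_eq hp hs₀ hp.not_dvd_one ?_
  simp

end WfDvdMonoid

variable [UniqueFactorizationMonoid S]

theorem associated_of_forall_isOrd_eq {s t : S} (hs : s ≠ 0) (ht : t ≠ 0)
    (h : ∀ (p : S) (ord : F → ℤ), Prime p → IsOrd p ord →
      ord (algebraMap S F s) = ord (algebraMap S F t)) :
    Associated s t := by
  have hmult : ∀ p : S, Prime p → emultiplicity p s = emultiplicity p t := by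
    intro p hp
    obtain ⟨ord, hord⟩ := exists_isOrd (F := F) hp
    have hst := h p ord hp hord
    rw [hord.apply_algebraMap hp hs, hord.apply_algebraMap hp ht, Nat.cast_inj] at hst
    rw [(FiniteMultiplicity.of_prime_left hp hs).emultiplicity_eq_multiplicity,
      (FiniteMultiplicity.of_prime_left hp ht).emultiplicity_eq_multiplicity, hst]
  exact associated_of_dvd_dvd
    ((UniqueFactorizationMonoid.dvd_iff_emultiplicity_le hs).mpr fun p hp => (hmult p hp).le)
    ((UniqueFactorizationMonoid.dvd_iff_emultiplicity_le ht).mpr fun p hp => (hmult p hp).ge)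

theorem exists_isUnit_eq_mul_of_forall_isOrd_eq {a b : F} (ha : a ≠ 0) (hb : b ≠ 0)
    (h : ∀ (p : S) (ord : F → ℤ), Prime p → IsOrd p ord → ord a = ord b) :
    ∃ u : S, IsUnit u ∧ a = algebraMap S F u * b := by
  obtain ⟨x, y, hy, rfl⟩ := exists_eq_algebraMap_div (S := S) a
  obtain ⟨x', y', hy', rfl⟩ := exists_eq_algebraMap_div (S := S) b
  have hx : x ≠ 0 := by rintro rfl; simp at ha
  have hx' : x' ≠ 0 := by rintro rfl; simp at hb
  have hY := algebraMap_ne_zero_of_ne_zero (F := F) hy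
  have hY' := algebraMap_ne_zero_of_ne_zero (F := F) hy'
  have hYY := algebraMap_ne_zero_of_ne_zero (F := F) (mul_ne_zero hy hy')
  have e : algebraMap S F (x * y') =
      algebraMap S F x / algebraMap S F y * algebraMap S F (y * y') := by
    rw [map_mul, map_mul]
    field_simp
  have e' : algebraMap S F (x' * y) =
      algebraMap S F x' / algebraMap S F y' * algebraMap S F (y * y') := by
    rw [map_mul, map_mul]
    field_simp
  obtain ⟨u, hu⟩ := associated_of_forall_isOrd_eq (F := F) (mul_ne_zero hx' hy)
    (mul_ne_zero hx hy') fun p ord hp hord => by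
      rw [e, e', hord.map_mul hp ha hYY, hord.map_mul hp hb hYY, h p ord hp hord]
  refine ⟨u, u.isUnit, ?_⟩
  have hu' := congrArg (algebraMap S F) hu
  simp only [map_mul] at hu'
  field_simp
  rw [← hu']
  ring

end Factorial

/-- Gauss' Lemma: over a subtractive factorial semidomain `S` with semifield of
fractions `F`, the content function `cont : F[X] → F` is multiplicative, i.e.
`cont (f * g) = cont f * cont g` up to multiplication by a unit of `S`. -/
theorem gauss_lemma {S F : Type*} [CommSemiring S] [IsCancelMulZero S]
    [Semifield F] [Algebra S F] [IsLocalization (nonZeroDivisors S) F]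
    (hSub : ∀ (I : Ideal S) (a b : S), a + b ∈ I → a ∈ I → b ∈ I)
    (hFact1 : ∀ s : S, Irreducible s → Prime s)
    (hFact2 : ∀ s : S, s ≠ 0 → ¬ IsUnit s →
      ∃ m : Multiset S, (∀ t ∈ m, Irreducible t) ∧ m.prod = s)
    (f g : Polynomial F) (c d e : F)
    (hc : IsContent (S := S) f c) (hd : IsContent (S := S) g d) (he : IsContent (S := S) (f * g) e) :
    ∃ u : S, IsUnit u ∧ e = algebraMap S F u * (c * d) := by
  have := UniqueFactorizationMonoid.of_irreducible_prime_of_exists_irreducible_factors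
    hFact1 hFact2
  by_cases hf : f = 0
  · exact ⟨1, isUnit_one, by simp [he.1 (by simp [hf]), hc.1 hf]⟩
  by_cases hg : g = 0
  · exact ⟨1, isUnit_one, by simp [he.1 (by simp [hg]), hd.1 hg]⟩
  obtain ⟨hc0, hcord⟩ := hc.2 hf
  obtain ⟨hd0, hdord⟩ := hd.2 hg
  obtain ⟨he0, heord⟩ := he.2 (mul_ne_zero hf hg)
  refine exists_isUnit_eq_mul_of_forall_isOrd_eq he0 (mul_ne_zero hc0 hd0)
    fun p ord hp hord => ?_
  have hsub (s t : S) (hst : p ∣ s + t) (hs : p ∣ s) : p ∣ t :=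
    Ideal.mem_span_singleton.mp <| hSub _ s t (Ideal.mem_span_singleton.mpr hst)
      (Ideal.mem_span_singleton.mpr hs)
  have h := heord p ord hp hord
  rw [ordPoly_mul hp hord hsub hf hg, ← hcord p ord hp hord, ← hdord p ord hp hord] at h
  rw [hord.map_mul hp hc0 hd0]
  exact_mod_cast h
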